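/- arXiv:1711.05749 — 4 statements merged into one kernel-verified Lean document; each statement's English description precedes it below -/
import Mathlib

section
/- Let φ : M → M' be a homomorphism of abelian groups such that the kernel of φ is finite and the cokernel of φ has no nontrivial divisible subgroup. If the maximal divisible subgroup of M or of M' is uniquely divisible (i.e., torsion-free), then φ restricts to an isomorphism from the maximal divisible subgroup of M onto the maximal divisible subgroup of M'. -/
/-- A subgroup `D` of an abelian group is divisible if every element of `D`
is divisible inside `D` by every positive integer. -/
def IsDivisibleSub {A : Type*} [AddCommGroup A] (D : AddSubgroup A) : Prop :=
  ∀ n : ℕ, 0 < n → ∀ d ∈ D, ∃ d' ∈ D, n • d' = d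

/-- The maximal divisible subgroup: the sum (supremum) of all divisible subgroups. -/
def maxDiv (A : Type*) [AddCommGroup A] : AddSubgroup A :=
  sSup {D : AddSubgroup A | IsDivisibleSub D}

/-- `M_div` is uniquely divisible iff it is torsion-free. -/
def MaxDivUniquelyDivisible (A : Type*) [AddCommGroup A] : Prop :=
  ∀ x ∈ maxDiv A, ∀ n : ℕ, 0 < n → n • x = 0 → x = 0

lemma le_maxDiv {A : Type*} [AddCommGroup A] {D : AddSubgroup A} (hD : IsDivisibleSub D) :
    D ≤ maxDiv A := le_sSup hD

lemma maxDiv_divisible (A : Type*) [AddCommGroup A] : IsDivisibleSub (maxDiv A) := by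
  intro n hn d hd
  have hd' : d ∈ ⨆ D : {D : AddSubgroup A // IsDivisibleSub D}, (D : AddSubgroup A) := by
    rwa [maxDiv, sSup_eq_iSup'] at hd
  refine AddSubgroup.iSup_induction (C := fun x => ∃ d' ∈ maxDiv A, n • d' = x) _ hd'
    (fun D x hx => ?_) ⟨0, (maxDiv A).zero_mem, smul_zero n⟩ ?_
  · obtain ⟨d', hd', hnd'⟩ := D.2 n hn x hx
    exact ⟨d', le_maxDiv D.2 hd', hnd'⟩
  · rintro x y ⟨a, ha, rfl⟩ ⟨b, hb, rfl⟩
    exact ⟨a + b, (maxDiv A).add_mem ha hb, smul_add n a b⟩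

lemma map_divisible {A B : Type*} [AddCommGroup A] [AddCommGroup B] (f : A →+ B)
    {D : AddSubgroup A} (hD : IsDivisibleSub D) : IsDivisibleSub (D.map f) := by
  rintro n hn _ ⟨d, hd, rfl⟩
  obtain ⟨d', hd', rfl⟩ := hD n hn d hd
  exact ⟨f d', ⟨d', hd', rfl⟩, by rw [← map_nsmul]⟩

theorem stmt0 {M M' : Type*} [AddCommGroup M] [AddCommGroup M'] (φ : M →+ M')
    (hker : (φ.ker : Set M).Finite)
    (hcoker : ∀ D : AddSubgroup (M' ⧸ φ.range), IsDivisibleSub D → D = ⊥)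
    (hud : MaxDivUniquelyDivisible M ∨ MaxDivUniquelyDivisible M') :
    (maxDiv M).map φ = maxDiv M' ∧ ∀ x ∈ maxDiv M, φ x = 0 → x = 0 := by
  classical
  haveI : Finite φ.ker := hker.to_subtype
  set c := Nat.card φ.ker with hc_def
  have hc : 0 < c := Nat.card_pos
  have hker0 : ∀ x ∈ φ.ker, c • x = 0 := by
    intro x hx
    have : c • (⟨x, hx⟩ : φ.ker) = 0 := card_nsmul_eq_zero'
    exact congrArg Subtype.val this
  have hdivM := maxDiv_divisible M
  have hdivM' := maxDiv_divisible M'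
  -- maxDiv M' is contained in the range of φ
  have hrange : maxDiv M' ≤ φ.range := by
    have h0 := hcoker ((maxDiv M').map (QuotientAddGroup.mk' φ.range))
      (map_divisible _ hdivM')
    intro x hx
    have : (QuotientAddGroup.mk' φ.range) x ∈
        (maxDiv M').map (QuotientAddGroup.mk' φ.range) := ⟨x, hx, rfl⟩
    rw [h0, AddSubgroup.mem_bot] at this
    have : x ∈ (QuotientAddGroup.mk' φ.range).ker := this
    rwa [QuotientAddGroup.ker_mk'] at this
  -- the image of maxDiv M is contained in maxDiv M'
  have him : (maxDiv M).map φ ≤ maxDiv M' := le_maxDiv (map_divisible φ hdivM)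
  -- the multiplication-by-c map
  set f : M →+ M := AddMonoidHom.mk' (fun x => c • x) (fun a b => smul_add c a b) with hf_def
  set H : AddSubgroup M := (maxDiv M').comap φ with hH_def
  set D : AddSubgroup M := H.map f with hD_def
  have hDdiv : IsDivisibleSub D := by
    rintro n hn _ ⟨h, hh, rfl⟩
    have hφh : φ h ∈ maxDiv M' := hh
    obtain ⟨y', hy', hy'eq⟩ := hdivM' (n * c) (Nat.mul_pos hn hc) (φ h) hφh
    obtain ⟨h₁, rfl⟩ := hrange hy'
    have hκ : h - (n * c) • h₁ ∈ φ.ker := by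
      simp [AddMonoidHom.mem_ker, map_nsmul, hy'eq]
    refine ⟨f (c • h₁), ⟨c • h₁, ?_, rfl⟩, ?_⟩
    · show φ (c • h₁) ∈ maxDiv M'
      rw [map_nsmul]
      exact (maxDiv M').nsmul_mem hy' c
    · have h1 : c • (h - (n * c) • h₁) = 0 := hker0 _ hκ
      have h2 : c • h = c • ((n * c) • h₁) := by
        rw [smul_sub] at h1
        exact sub_eq_zero.mp h1
      show n • (c • c • h₁) = f h
      show n • (c • c • h₁) = c • h
      rw [h2]
      simp only [smul_smul]
      congr 1
      ring
  have hDle : D ≤ maxDiv M := le_maxDiv hDdiv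
  constructor
  · refine le_antisymm him ?_
    intro x hx
    obtain ⟨y', hy', hy'eq⟩ := hdivM' c hc x hx
    obtain ⟨h₁, rfl⟩ := hrange hy'
    refine ⟨f h₁, hDle ⟨h₁, hy', rfl⟩, ?_⟩
    show φ (c • h₁) = x
    rw [map_nsmul, hy'eq]
  · intro x hx hφx
    rcases hud with hudM | hudM'
    · exact hudM x hx c hc (hker0 x hφx)
    · obtain ⟨y, hy, hyeq⟩ := hdivM c hc x hx
      have hφy : φ y ∈ maxDiv M' := him ⟨y, hy, rfl⟩
      have : c • φ y = 0 := by rw [← map_nsmul, hyeq, hφx]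
      have hy0 : φ y = 0 := hudM' (φ y) hφy c hc this
      rw [← hyeq]
      exact hker0 y hy0
end

section
/- Let M be an abelian group that is finite modulo a uniquely divisible subgroup, i.e., M_div is uniquely divisible and M/M_div is finite. Then the torsion subgroup M_tors of M is finite and M is the internal direct sum of M_div and M_tors. -/
theorem stmt2 {M : Type*} [AddCommGroup M]
    (hud : ∀ x ∈ maxDiv M, ∀ n : ℕ, 0 < n → n • x = 0 → x = 0)
    (hfin : Finite (M ⧸ maxDiv M)) :
    (AddCommGroup.torsion M : Set M).Finite ∧
      maxDiv M ⊔ AddCommGroup.torsion M = ⊤ ∧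
      maxDiv M ⊓ AddCommGroup.torsion M = ⊥ := by
  have hdiv := maxDiv_divisible M
  -- torsion ∩ maxDiv = ⊥
  have hinf : maxDiv M ⊓ AddCommGroup.torsion M = ⊥ := by
    rw [eq_bot_iff]
    rintro x ⟨hx1, hx2⟩
    have : IsOfFinAddOrder x := hx2
    obtain ⟨n, hn, hnx⟩ := isOfFinAddOrder_iff_nsmul_eq_zero.mp this
    exact hud x hx1 n hn hnx
  -- torsion is finite
  have hinj : Function.Injective
      (fun t : AddCommGroup.torsion M => QuotientAddGroup.mk (s := maxDiv M) (t : M)) := by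
    intro a b hab
    have h : ((a : M) - b) ∈ maxDiv M := by
      rwa [QuotientAddGroup.eq_iff_sub_mem] at hab
    have htors : ((a : M) - b) ∈ AddCommGroup.torsion M := sub_mem a.2 b.2
    have : ((a : M) - b) ∈ maxDiv M ⊓ AddCommGroup.torsion M := ⟨h, htors⟩
    rw [hinf] at this
    have := sub_eq_zero.mp this
    exact Subtype.ext this
  have hfin' : Finite (AddCommGroup.torsion M) := Finite.of_injective _ hinj
  refine ⟨Set.toFinite _, ?_, hinf⟩
  -- sup = ⊤
  rw [eq_top_iff]
  intro x _
  cases nonempty_fintype (M ⧸ maxDiv M)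
  set n := Fintype.card (M ⧸ maxDiv M) with hn
  have hnpos : 0 < n := Fintype.card_pos
  have hnx : (n • x) ∈ maxDiv M := by
    have : n • (QuotientAddGroup.mk (s := maxDiv M) x) = 0 := card_nsmul_eq_zero
    rwa [← QuotientAddGroup.mk_nsmul, QuotientAddGroup.eq_zero_iff] at this
  obtain ⟨d', hd', hnd'⟩ := hdiv n hnpos _ hnx
  have htors : x - d' ∈ AddCommGroup.torsion M := by
    refine isOfFinAddOrder_iff_nsmul_eq_zero.mpr ⟨n, hnpos, ?_⟩
    rw [smul_sub, hnd', sub_self]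
  rw [AddSubgroup.mem_sup]
  exact ⟨d', hd', x - d', htors, by abel⟩
end

section
/- Let M be an abelian group whose torsion subgroup is finite. Then the intersection of the subgroups n·M over all positive integers n equals the maximal divisible subgroup M_div of M. In particular, the natural map M/M_div → lim_n (M/nM) is injective. -/
theorem stmt5 {M : Type*} [AddCommGroup M]
    (htors : (AddCommGroup.torsion M : Set M).Finite) :
    ∀ x : M, (∀ n : ℕ, 0 < n → ∃ y : M, n • y = x) ↔ x ∈ maxDiv M := by
  classical
  -- the subgroup of divisible elements
  set D : AddSubgroup M :=
    { carrier := {x : M | ∀ n : ℕ, 0 < n → ∃ y : M, n • y = x}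
      zero_mem' := fun n _ => ⟨0, smul_zero n⟩
      add_mem' := by
        rintro a b ha hb n hn
        obtain ⟨y, hy⟩ := ha n hn
        obtain ⟨z, hz⟩ := hb n hn
        exact ⟨y + z, by rw [smul_add, hy, hz]⟩
      neg_mem' := by
        rintro a ha n hn
        obtain ⟨y, hy⟩ := ha n hn
        exact ⟨-y, by rw [smul_neg, hy]⟩ } with hD
  have hmemD : ∀ x : M, x ∈ D ↔ ∀ n : ℕ, 0 < n → ∃ y : M, n • y = x := fun _ => Iff.rfl
  -- D is divisible
  have hDdiv : IsDivisibleSub D := by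
    intro n hn x hx
    obtain ⟨y0, hy0⟩ := (hmemD x).1 hx n hn
    -- fibers
    set S : ℕ → Set M := fun m => {y : M | n • y = x ∧ ∃ z : M, m • z = y} with hS
    have hfin : ∀ m, (S m).Finite := by
      intro m
      have hsub : S m ⊆ (fun t => y0 + t) '' (AddCommGroup.torsion M : Set M) := by
        rintro y ⟨hy, -⟩
        refine ⟨y - y0, ?_, by simp⟩
        have h0 : n • (y - y0) = 0 := by rw [smul_sub, hy, hy0, sub_self]
        exact isOfFinAddOrder_iff_nsmul_eq_zero.2 ⟨n, hn, h0⟩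
      exact ((htors.image _).subset hsub)
    have hne : ∀ m, 0 < m → (S m).Nonempty := by
      intro m hm
      obtain ⟨z, hz⟩ := (hmemD x).1 hx (n * m) (Nat.mul_pos hn hm)
      exact ⟨m • z, by rw [← mul_smul]; exact hz, z, rfl⟩
    have hmono : ∀ m m' : ℕ, m ∣ m' → S m' ⊆ S m := by
      rintro m m' ⟨k, rfl⟩ y ⟨hy, z, hz⟩
      exact ⟨hy, k • z, by rw [← mul_smul]; exact hz⟩
    -- choose m0 with minimal fiber cardinality
    set K : Set ℕ := {k : ℕ | ∃ m : ℕ, 0 < m ∧ (S m).ncard = k} with hK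
    have hKne : K.Nonempty := ⟨(S 1).ncard, 1, one_pos, rfl⟩
    obtain ⟨m0, hm0, hm0card⟩ : sInf K ∈ K := Nat.sInf_mem hKne
    have hmin : ∀ m : ℕ, 0 < m → S m0 ⊆ S m := by
      intro m hm
      have h1 : S (m0 * m) ⊆ S m0 := hmono _ _ ⟨m, rfl⟩
      have h2 : S (m0 * m) ⊆ S m := hmono _ _ ⟨m0, mul_comm _ _⟩
      have hle : (S m0).ncard ≤ (S (m0 * m)).ncard := by
        rw [hm0card]
        exact Nat.sInf_le ⟨m0 * m, Nat.mul_pos hm0 hm, rfl⟩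
      have heq : S (m0 * m) = S m0 :=
        Set.eq_of_subset_of_ncard_le h1 hle (hfin m0)
      rw [← heq]
      exact h2
    obtain ⟨y, hy, hydiv⟩ := hne m0 hm0
    refine ⟨y, ?_, hy⟩
    rw [hmemD]
    intro m hm
    exact (hmin m hm ⟨hy, hydiv⟩).2
  intro x
  constructor
  · intro hx
    exact (le_sSup (α := AddSubgroup M) hDdiv) ((hmemD x).2 hx)
  · intro hx
    have hle : maxDiv M ≤ D := by
      apply sSup_le
      intro E hE y hy
      rw [hmemD]
      intro m hm
      obtain ⟨d', _, h⟩ := hE m hm y hy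
      exact ⟨d', h⟩
    exact (hmemD x).1 (hle hx)
end

section
/- Let A be an abelian group that is finite modulo a uniquely divisible subgroup (A_div is torsion-free divisible and A/A_div is finite), and let M ⊆ A be a finitely generated infinite subgroup. Then the torsion subgroup of A/M is infinite. -/
theorem stmt8 {A : Type*} [AddCommGroup A]
    (hdiv : IsDivisibleSub (maxDiv A))
    (hud : ∀ x ∈ maxDiv A, ∀ n : ℕ, 0 < n → n • x = 0 → x = 0)
    (hfin : Finite (A ⧸ maxDiv A))
    (M : AddSubgroup A) (hFG : M.FG) (hM : Infinite M) :
    Infinite (AddCommGroup.torsion (A ⧸ M)) := by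
  classical
  -- Step 1: find a nonzero element m ∈ M ∩ maxDiv A
  obtain ⟨a, b, hab, hab2⟩ := Finite.exists_ne_map_eq_of_infinite
    (fun x : M => (QuotientAddGroup.mk x.1 : A ⧸ maxDiv A))
  set m : A := a.1 - b.1 with hm
  have hmM : m ∈ M := sub_mem a.2 b.2
  have hmD : m ∈ maxDiv A := by
    have h := QuotientAddGroup.eq.mp hab2
    have h2 := (maxDiv A).neg_mem h
    rw [neg_add_rev, neg_neg] at h2
    rwa [hm, sub_eq_add_neg, add_comm]
  have hm0 : m ≠ 0 := by
    intro h
    exact hab (Subtype.ext (by rwa [hm, sub_eq_zero] at h))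
  -- Step 2: assume the torsion is finite
  by_contra hT
  rw [not_infinite_iff_finite] at hT
  set T := AddCommGroup.torsion (A ⧸ M) with hTdef
  set N : ℕ := Nat.card T with hN
  have hNpos : 0 < N := Nat.card_pos
  -- Step 3: m is divisible by every n within M ∩ maxDiv A
  have key : ∀ n : ℕ, 0 < n → ∃ y ∈ (maxDiv A) ⊓ M, n • y = m := by
    intro n hn
    obtain ⟨x, hxD, hx⟩ := hdiv (n * N) (Nat.mul_pos hn hNpos) m hmD
    have hxT : (QuotientAddGroup.mk x : A ⧸ M) ∈ T := by
      refine isOfFinAddOrder_iff_nsmul_eq_zero.mpr ⟨n * N, Nat.mul_pos hn hNpos, ?_⟩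
      rw [← QuotientAddGroup.mk_nsmul, hx]
      exact (QuotientAddGroup.eq_zero_iff m).mpr hmM
    have hNx : N • (QuotientAddGroup.mk x : A ⧸ M) = 0 := by
      have : N • (⟨_, hxT⟩ : T) = 0 := card_nsmul_eq_zero'
      exact congrArg Subtype.val this
    have hyM : N • x ∈ M := by
      rw [← QuotientAddGroup.eq_zero_iff, QuotientAddGroup.mk_nsmul]
      exact hNx
    refine ⟨N • x, ⟨(maxDiv A).nsmul_mem hxD N, hyM⟩, ?_⟩
    rw [← mul_nsmul', hx]
  -- Step 4: contradiction via freeness of G := maxDiv A ⊓ M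
  set G : AddSubgroup A := (maxDiv A) ⊓ M with hG
  -- G is a finitely generated ℤ-module
  have hMSfg : (AddSubgroup.toIntSubmodule M).FG :=
    (Submodule.fg_iff_addSubgroup_fg _).mpr (by
      rwa [AddSubgroup.toIntSubmodule_toAddSubgroup])
  haveI : IsNoetherian ℤ M :=
    isNoetherian_of_fg_of_noetherian _ hMSfg
  haveI : IsNoetherian ℤ G := by
    refine isNoetherian_of_injective
      ((AddSubgroup.inclusion (inf_le_right : G ≤ M)).toIntLinearMap) ?_
    exact AddSubgroup.inclusion_injective (inf_le_right : G ≤ M)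
  haveI : Module.Finite ℤ G := inferInstance
  haveI : NoZeroSMulDivisors ℤ G := by
    refine ⟨fun {c x} hcx => ?_⟩
    by_cases hc : c = 0
    · exact Or.inl hc
    · right
      have h1 : c • (x : A) = 0 := congrArg Subtype.val hcx
      have h2 : (c.natAbs : ℤ) • (x : A) = 0 := by
        rcases Int.natAbs_eq c with h | h
        · rw [← h]; exact h1
        · rw [h, neg_smul, neg_eq_zero] at h1; exact h1
      have h3 : c.natAbs • (x : A) = 0 := by
        rwa [natCast_zsmul] at h2
      exact Subtype.ext (hud x.1 x.2.1 c.natAbs (Int.natAbs_pos.mpr hc) h3)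
  haveI : Module.Free ℤ G := Module.free_of_finite_type_torsion_free'
  -- the element m as an element of G
  set g : G := ⟨m, hmD, hmM⟩ with hgdef
  have hg0 : g ≠ 0 := fun h => hm0 (congrArg Subtype.val h)
  -- choose a basis and a coordinate where g is nonzero
  let b := Module.Free.chooseBasis ℤ G
  have hrepr : b.repr g ≠ 0 := fun h => hg0 (by
    have := congrArg b.repr.symm h
    simpa using this)
  obtain ⟨i, hi⟩ : ∃ i, b.repr g i ≠ 0 := by
    by_contra h
    push_neg at h
    exact hrepr (Finsupp.ext h)
  -- take n larger than the coordinate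
  set n : ℕ := (b.repr g i).natAbs + 1 with hn
  obtain ⟨y, hyG, hny⟩ := key n (Nat.succ_pos _)
  set yG : G := ⟨y, hyG⟩ with hyGdef
  have hng : (n : ℤ) • yG = g := by
    apply Subtype.ext
    show (n : ℤ) • y = m
    rw [natCast_zsmul]
    exact hny
  have hdvd : (n : ℤ) ∣ b.repr g i := by
    refine ⟨b.repr yG i, ?_⟩
    rw [← hng, map_zsmul, Finsupp.smul_apply, smul_eq_mul]
  have : n ∣ (b.repr g i).natAbs := by
    have := Int.natAbs_dvd_natAbs.mpr hdvd
    simpa using this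
  have hle : n ≤ (b.repr g i).natAbs :=
    Nat.le_of_dvd (Int.natAbs_pos.mpr hi) this
  omega
end
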